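/- The clause R_{in} = [¬p_{i(n−1)}] is a WSR clause (with entailment in place of RUP) over the formula Fᵢ = Πₙ ∪ {R_{1n},…,R_{(i−1)n}} upon the pigeon-swap substitution σ_{in}, modulo the empty set, for each 1 ≤ i < n and n ≥ 2. In particular, Fᵢ entails R_{in} ∨ R_{in}|σ_{in} = ¬p_{i(n−1)} ∨ ¬p_{n(n−1)}, which is the clause P_{in(n−1)} ∈ Πₙ. -/
import Mathlib


inductive Atom (V : Type) where
  | tru : Atom V
  | fls : Atom V
  | lit : V → Bool → Atom V
deriving DecidableEq

def Atom.compl {V : Type} : Atom V → Atom V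
  | .tru => .fls
  | .fls => .tru
  | .lit v b => .lit v (!b)

/-- A literal: a variable together with a polarity. -/
abbrev Lit (V : Type) := V × Bool

def Lit.neg {V : Type} (l : Lit V) : Lit V := (l.1, !l.2)

/-- A model is determined by a total assignment to the variables. -/
abbrev Model (V : Type) := V → Bool

def evalAtom {V : Type} (I : Model V) : Atom V → Bool
  | .tru => true
  | .fls => false
  | .lit v b => I v == b

/-- A substitution maps each variable to an atom (extended to atoms/literals below). -/
abbrev Subst (V : Type) := V → Atom V

/-- Atomicity: only finitely many variables are moved. -/
def Subst.IsAtomic {V : Type} (σ : Subst V) : Prop :=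
  {v : V | σ v ≠ Atom.lit v true}.Finite

def idSub (V : Type) : Subst V := fun v => Atom.lit v true

/-- Apply a substitution to a literal, yielding an atom. -/
def subLit {V : Type} (σ : Subst V) (l : Lit V) : Atom V :=
  if l.2 then σ l.1 else (σ l.1).compl

/-- The composed model `I ∘ σ`. -/
def compModel {V : Type} (I : Model V) (σ : Subst V) : Model V :=
  fun v => evalAtom I (σ v)

def satLit {V : Type} (I : Model V) (l : Lit V) : Prop := I l.1 = l.2

/-- A clause: a finite set of literals (disjunctive reading). -/
abbrev Clause (V : Type) := Finset (Lit V)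

/-- Non-tautological: no complementary pair of literals. -/
def Clause.Nontaut {V : Type} (C : Clause V) : Prop :=
  ∀ v : V, ¬ ((v, true) ∈ C ∧ (v, false) ∈ C)

def satClause {V : Type} (I : Model V) (C : Clause V) : Prop :=
  ∃ l ∈ C, satLit I l

/-- `I` falsifies `C`, i.e. satisfies the cube `¬C`. -/
def falsifiesClause {V : Type} (I : Model V) (C : Clause V) : Prop :=
  ∀ l ∈ C, satLit I (Lit.neg l)

/-- A cube is a finite set of literals read conjunctively. -/
def satCube {V : Type} (I : Model V) (Q : Finset (Lit V)) : Prop :=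
  ∀ l ∈ Q, satLit I l

/-- `σ` trivializes `C`: some literal is mapped to ⊤, or two literals are mapped
to complementary atoms. -/
def Trivializes {V : Type} (σ : Subst V) (C : Clause V) : Prop :=
  (∃ l ∈ C, subLit σ l = Atom.tru) ∨
    (∃ l ∈ C, ∃ k ∈ C, subLit σ l = (subLit σ k).compl)

/-- The reduct `C|σ`: images of the literals of `C` that remain literals
(in particular atoms mapped to ⊥ are dropped). -/
def reduct {V : Type} (σ : Subst V) (C : Clause V) : Set (Lit V) :=
  {m | ∃ l ∈ C, subLit σ l = Atom.lit m.1 m.2}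

/-- Disjunctive satisfaction of a (possibly infinite) set of literals. -/
def satLitSet {V : Type} (I : Model V) (S : Set (Lit V)) : Prop :=
  ∃ l ∈ S, satLit I l

/-- A CNF formula: a finite set of clauses. -/
abbrev CNF (V : Type) := Finset (Clause V)

def satCNF {V : Type} (I : Model V) (F : CNF V) : Prop :=
  ∀ C ∈ F, satClause I C

open Classical in
/-- Conditional mutation of a model: apply `σ` if the trigger `T` holds. -/
noncomputable def mutate {V : Type} (I : Model V) (σ : Subst V) (T : Prop) : Model V :=
  if T then compModel I σ else I

/-- A cubic mutation rule `(σ ≔ Q)`. -/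
structure MutRule (V : Type) where
  eff : Subst V
  trig : Finset (Lit V)

noncomputable def applyRule {V : Type} (I : Model V) (ε : MutRule V) : Model V :=
  mutate I ε.eff (satCube I ε.trig)

/-- Apply a sequence of cubic mutation rules `ε₁, …, εₙ` (left to right). -/
noncomputable def applyRules {V : Type} (I : Model V) : List (MutRule V) → Model V
  | [] => I
  | ε :: εs => applyRules (applyRule I ε) εs

/-- SR clause (entailment version of the RUP condition). -/
def IsSR {V : Type} (F : CNF V) (C : Clause V) (σ : Subst V) : Prop :=
  Trivializes σ C ∧
    ∀ D ∈ F, Trivializes σ D ∨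
      (∀ I : Model V, falsifiesClause I C → satLitSet I (reduct σ D)) ∨
      (∀ I : Model V, satCNF I F → satClause I C ∨ satLitSet I (reduct σ D))

/-- WSR clause upon `σ` modulo `Δ` (entailment version of the RUP condition). -/
def IsWSR {V : Type} [DecidableEq V] (F : CNF V) (C : Clause V) (σ : Subst V)
    (Δ : CNF V) : Prop :=
  ∀ D ∈ (F \ Δ) ∪ {C}, Trivializes σ D ∨
    (∀ I : Model V, falsifiesClause I C → satLitSet I (reduct σ D)) ∨
    (∀ I : Model V, satCNF I F → satClause I C ∨ satLitSet I (reduct σ D))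

/-- The substitution `Q*` associated with a cube `Q`. -/
def cubeStar {V : Type} [DecidableEq V] (Q : Finset (Lit V)) : Subst V := fun v =>
  if (v, true) ∈ Q then Atom.tru
  else if (v, false) ∈ Q then Atom.fls
  else Atom.lit v true

/-- Pigeonhole variables: `(i, j)` means "pigeon i is in hole j". -/
def Hcl (i n : ℕ) : Clause (ℕ × ℕ) :=
  (Finset.Ico 1 n).image fun j => ((i, j), true)

def Pcl (i j k : ℕ) : Clause (ℕ × ℕ) :=
  {((i, k), false), ((j, k), false)}

/-- The pigeonhole formula Πₙ. -/
def PHP (n : ℕ) : CNF (ℕ × ℕ) :=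
  ((Finset.Icc 1 n).image fun i => Hcl i n) ∪
    ((((Finset.Icc 1 n ×ˢ Finset.Icc 1 n) ×ˢ Finset.Ico 1 n).filter
        fun t => t.1.1 < t.1.2).image fun t => Pcl t.1.1 t.1.2 t.2)

def Rcl (i n : ℕ) : Clause (ℕ × ℕ) := {((i, n - 1), false)}

/-- The pigeon-swap substitution σᵢₙ, swapping `p i j` with `p n j` for `1 ≤ j < n`. -/
def swapSub (i n : ℕ) : Subst (ℕ × ℕ) := fun p =>
  if p.1 = i ∧ 1 ≤ p.2 ∧ p.2 < n then Atom.lit (n, p.2) true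
  else if p.1 = n ∧ 1 ≤ p.2 ∧ p.2 < n then Atom.lit (i, p.2) true
  else Atom.lit p true

/-- The underlying variable permutation of the pigeon swap. -/
def swapVar (i n : ℕ) (p : ℕ × ℕ) : ℕ × ℕ :=
  if p.1 = i ∧ 1 ≤ p.2 ∧ p.2 < n then (n, p.2)
  else if p.1 = n ∧ 1 ≤ p.2 ∧ p.2 < n then (i, p.2)
  else p

lemma swapSub_eq (i n : ℕ) (p : ℕ × ℕ) :
    swapSub i n p = Atom.lit (swapVar i n p) true := by
  unfold swapSub swapVar
  split_ifs <;> rfl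

lemma compModel_swap (I : Model (ℕ × ℕ)) (i n : ℕ) (p : ℕ × ℕ) :
    compModel I (swapSub i n) p = I (swapVar i n p) := by
  simp [compModel, swapSub_eq, evalAtom]

lemma subLit_swap (i n : ℕ) (l : Lit (ℕ × ℕ)) :
    subLit (swapSub i n) l = Atom.lit (swapVar i n l.1) l.2 := by
  obtain ⟨v, b⟩ := l
  cases b <;> simp [subLit, swapSub_eq, Atom.compl]

lemma reduct_swap_sat (I : Model (ℕ × ℕ)) (i n : ℕ) (D : Clause (ℕ × ℕ)) :
    satLitSet I (reduct (swapSub i n) D) ↔ satClause (compModel I (swapSub i n)) D := by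
  constructor
  · rintro ⟨m, ⟨l, hl, hsub⟩, hsat⟩
    refine ⟨l, hl, ?_⟩
    rw [subLit_swap] at hsub
    injection hsub with h1 h2
    show compModel I (swapSub i n) l.1 = l.2
    rw [compModel_swap, h1, h2]; exact hsat
  · rintro ⟨l, hl, hsat⟩
    refine ⟨(swapVar i n l.1, l.2), ⟨l, hl, by rw [subLit_swap]⟩, ?_⟩
    show I (swapVar i n l.1) = l.2
    rw [← compModel_swap I i n l.1]; exact hsat

lemma swapVar_eq (i n a j : ℕ) (hj1 : 1 ≤ j) (hj2 : j < n) :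
    swapVar i n (a, j) = ((if a = i then n else if a = n then i else a), j) := by
  unfold swapVar
  split_ifs <;> simp_all

lemma Pcl_mem_PHP {a b k n : ℕ} (ha : a ∈ Finset.Icc 1 n) (hb : b ∈ Finset.Icc 1 n)
    (hab : a < b) (hk : k ∈ Finset.Ico 1 n) : Pcl a b k ∈ PHP n := by
  apply Finset.mem_union_right
  simp only [Finset.mem_image, Finset.mem_filter, Finset.mem_product]
  exact ⟨((a, b), k), ⟨⟨⟨ha, hb⟩, hk⟩, hab⟩, rfl⟩

lemma Hcl_mem_PHP {a n : ℕ} (ha : a ∈ Finset.Icc 1 n) : Hcl a n ∈ PHP n :=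
  Finset.mem_union_left _ (Finset.mem_image_of_mem _ ha)

lemma pcl_sat {I : Model (ℕ × ℕ)} {n : ℕ} (hI : satCNF I (PHP n)) {a b k : ℕ}
    (ha : a ∈ Finset.Icc 1 n) (hb : b ∈ Finset.Icc 1 n) (hab : a ≠ b)
    (hk : k ∈ Finset.Ico 1 n) : satClause I (Pcl a b k) := by
  rcases hab.lt_or_gt with h | h
  · exact hI _ (Pcl_mem_PHP ha hb h hk)
  · have h2 := hI _ (Pcl_mem_PHP hb ha h hk)
    have heq : Pcl b a k = Pcl a b k := by
      unfold Pcl; exact Finset.pair_comm _ _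
    rwa [heq] at h2

lemma sat_swap {I : Model (ℕ × ℕ)} {i n : ℕ} (hn : 2 ≤ n) (hi : 1 ≤ i) (hin : i < n)
    (hI : satCNF I (PHP n ∪ (Finset.Ico 1 i).image (fun k => Rcl k n))) :
    satCNF (compModel I (swapSub i n)) (PHP n ∪ (Finset.Ico 1 i).image (fun k => Rcl k n)) := by
  have hPHP : satCNF I (PHP n) := fun D hD => hI D (Finset.mem_union_left _ hD)
  intro D hD
  rw [Finset.mem_union] at hD
  rcases hD with hD | hD
  · rw [PHP, Finset.mem_union] at hD
    rcases hD with hD | hD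
    · -- Hole clause case
      simp only [Finset.mem_image] at hD
      obtain ⟨a, ha, rfl⟩ := hD
      have haI : 1 ≤ a ∧ a ≤ n := Finset.mem_Icc.mp ha
      set τa := if a = i then n else if a = n then i else a with hta
      have hτa : τa ∈ Finset.Icc 1 n := by
        rw [Finset.mem_Icc, hta]; split_ifs <;> omega
      obtain ⟨l, hl, hsl⟩ := hPHP _ (Hcl_mem_PHP hτa)
      rw [Hcl, Finset.mem_image] at hl
      obtain ⟨j, hj, rfl⟩ := hl
      have hjI := Finset.mem_Ico.mp hj
      refine ⟨((a, j), true), ?_, ?_⟩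
      · rw [Hcl, Finset.mem_image]; exact ⟨j, hj, rfl⟩
      · show compModel I (swapSub i n) (a, j) = true
        rw [compModel_swap, swapVar_eq i n a j hjI.1 hjI.2, ← hta]
        exact hsl
    · -- Pigeon clause case
      simp only [Finset.mem_image, Finset.mem_filter, Finset.mem_product] at hD
      obtain ⟨⟨⟨a, b⟩, k⟩, ⟨⟨⟨ha, hb⟩, hk⟩, hab⟩, rfl⟩ := hD
      have haI : 1 ≤ a ∧ a ≤ n := Finset.mem_Icc.mp ha
      have hbI : 1 ≤ b ∧ b ≤ n := Finset.mem_Icc.mp hb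
      have hkI : 1 ≤ k ∧ k < n := Finset.mem_Ico.mp hk
      have hab' : a < b := hab
      set τa := if a = i then n else if a = n then i else a with hta
      set τb := if b = i then n else if b = n then i else b with htb
      have hτa : τa ∈ Finset.Icc 1 n := by
        rw [Finset.mem_Icc, hta]; split_ifs <;> omega
      have hτb : τb ∈ Finset.Icc 1 n := by
        rw [Finset.mem_Icc, htb]; split_ifs <;> omega
      have hne : τa ≠ τb := by
        rw [hta, htb]; split_ifs <;> omega
      obtain ⟨l, hl, hsl⟩ := pcl_sat hPHP hτa hτb hne hk
      simp only [Pcl, Finset.mem_insert, Finset.mem_singleton] at hl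
      rcases hl with rfl | rfl
      · refine ⟨((a, k), false), by simp [Pcl], ?_⟩
        show compModel I (swapSub i n) (a, k) = false
        rw [compModel_swap, swapVar_eq i n a k hkI.1 hkI.2, ← hta]
        exact hsl
      · refine ⟨((b, k), false), by simp [Pcl], ?_⟩
        show compModel I (swapSub i n) (b, k) = false
        rw [compModel_swap, swapVar_eq i n b k hkI.1 hkI.2, ← htb]
        exact hsl
  · -- R clause case
    simp only [Finset.mem_image] at hD
    obtain ⟨k, hk, rfl⟩ := hD
    have hkI := Finset.mem_Ico.mp hk
    obtain ⟨l, hl, hsl⟩ := hI _ (Finset.mem_union_right _ (Finset.mem_image_of_mem _ hk))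
    rw [Rcl, Finset.mem_singleton] at hl
    subst hl
    refine ⟨((k, n - 1), false), Finset.mem_singleton_self _, ?_⟩
    show compModel I (swapSub i n) (k, n - 1) = false
    rw [compModel_swap]
    have hs : swapVar i n (k, n - 1) = (k, n - 1) := by
      unfold swapVar
      split_ifs with h1 h2
      · exact absurd h1.1 (by omega)
      · exact absurd h2.1 (by omega)
      · rfl
    rw [hs]; exact hsl

/-- `Rᵢₙ = [¬p_{i(n−1)}]` is a WSR clause (entailment version) over
`Fᵢ = Πₙ ∪ {R₁ₙ, …, R₍ᵢ₋₁₎ₙ}` upon the pigeon swap σᵢₙ modulo ∅; in particular `Fᵢ`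
entails `Rᵢₙ ∨ Rᵢₙ|σᵢₙ`, which is the clause `P_{i n (n−1)} ∈ Πₙ`. -/
theorem php_R_wsr (i n : ℕ) (hn : 2 ≤ n) (hi : 1 ≤ i) (hin : i < n) :
    IsWSR (PHP n ∪ (Finset.Ico 1 i).image (fun k => Rcl k n)) (Rcl i n) (swapSub i n) ∅ ∧
      (∀ I : Model (ℕ × ℕ),
          satCNF I (PHP n ∪ (Finset.Ico 1 i).image (fun k => Rcl k n)) →
            satClause I (Rcl i n) ∨ satLitSet I (reduct (swapSub i n) (Rcl i n))) ∧
      Pcl i n (n - 1) ∈ PHP n := by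
  have hmemP : Pcl i n (n - 1) ∈ PHP n :=
    Pcl_mem_PHP (Finset.mem_Icc.mpr (by omega)) (Finset.mem_Icc.mpr (by omega)) hin
      (Finset.mem_Ico.mpr (by omega))
  have key : ∀ I : Model (ℕ × ℕ),
      satCNF I (PHP n ∪ (Finset.Ico 1 i).image (fun k => Rcl k n)) →
        satClause I (Rcl i n) ∨ satLitSet I (reduct (swapSub i n) (Rcl i n)) := by
    intro I hI
    by_cases h : I (i, n - 1) = false
    · exact Or.inl ⟨((i, n - 1), false), Finset.mem_singleton_self _, h⟩
    · right
      rw [reduct_swap_sat]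
      refine ⟨((i, n - 1), false), Finset.mem_singleton_self _, ?_⟩
      show compModel I (swapSub i n) (i, n - 1) = false
      rw [compModel_swap, swapVar_eq i n i (n - 1) (by omega) (by omega), if_pos rfl]
      obtain ⟨l, hl, hsl⟩ := hI _ (Finset.mem_union_left _ hmemP)
      simp only [Pcl, Finset.mem_insert, Finset.mem_singleton] at hl
      rcases hl with rfl | rfl
      · exact absurd hsl h
      · exact hsl
  refine ⟨?_, key, hmemP⟩
  intro D hD
  rw [Finset.sdiff_empty, Finset.mem_union, Finset.mem_singleton] at hD
  rcases hD with hD | rfl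
  · right; right
    intro I hI
    right
    rw [reduct_swap_sat]
    exact sat_swap hn hi hin hI D hD
  · right; right
    exact key
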